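/- arXiv:2106.09755 — 4 statements merged into one kernel-verified Lean document; each statement's English description precedes it below -/
import Mathlib

section
/- Let q be a prime power, d1, d2 positive integers, c = gcd(d1, d2), q1 = q^{d1}, q2 = q^{d2}. For m ≥ 1 set M_m = (q1^m - 1)/(q^{cm} - 1). Then for any positive integer n, the number of pairs (x, y) with x ∈ F_{q1^m}, y ∈ F_{q2^m}, and y = x^n equals gcd(n, M_m)·(q^{cm} - 1) + 1. -/
/-!
A nonzero `x` lies in a subfield with `Q` elements iff `x ^ (Q - 1) = 1`. Hence, writing
`Qᵢ = q ^ (dᵢ m)`, the nonzero `x ∈ K₁` with `x ^ n ∈ K₂` are exactly the `E`-th roots of unity,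
`E = gcd (n (Q₂ - 1)) (Q₁ - 1)`. As `E ∣ Q₁ - 1 ∣ |L| - 1` and `Lˣ` is cyclic, there are exactly `E`
of them. Finally `gcd (Q₁ - 1) (Q₂ - 1) = q ^ (c m) - 1` and the cofactors `M` and
`(Q₂ - 1) / (q ^ (c m) - 1)` are coprime, so `E = gcd n M * (q ^ (c m) - 1)`.
-/

open Polynomial

theorem Nat.gcd_mul_left_eq_gcd_div_gcd_mul (n a b : ℕ) :
    Nat.gcd (n * b) a = Nat.gcd n (a / Nat.gcd a b) * Nat.gcd a b := by
  rcases Nat.eq_zero_or_pos (Nat.gcd a b) with hg | hg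
  · simp [Nat.gcd_eq_zero_iff.mp hg]
  obtain ⟨a', b', hcop, ha, hb⟩ := Nat.exists_coprime a b
  set g := Nat.gcd a b
  rw [ha, hb, Nat.mul_div_cancel _ hg, ← mul_assoc, Nat.gcd_mul_right,
    Nat.Coprime.gcd_mul_right_cancel _ hcop.symm]

namespace FiniteField

variable {F : Type*} [Field F] [Finite F]

theorem exists_isPrimitiveRoot_of_dvd {k : ℕ} (hk : k ∣ Nat.card F - 1) :
    ∃ ζ : F, IsPrimitiveRoot ζ k := by
  rw [← Nat.card_units] at hk
  obtain ⟨g, hg⟩ := IsCyclic.exists_ofOrder_eq_natCard (α := Fˣ)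
  have hN : 0 < Nat.card Fˣ := Nat.card_pos
  have hg : IsPrimitiveRoot g (Nat.card Fˣ) := hg ▸ IsPrimitiveRoot.orderOf g
  have hpow := hg.pow_of_dvd
    (Nat.div_pos (Nat.le_of_dvd hN hk) (Nat.pos_of_dvd_of_pos hk hN)).ne' (Nat.div_dvd_of_dvd hk)
  rw [Nat.div_div_self hk hN.ne'] at hpow
  exact ⟨_, IsPrimitiveRoot.coe_units_iff.mpr hpow⟩

theorem card_eq_zero_or_pow_eq_one {k : ℕ} (hk : k ∣ Nat.card F - 1) :
    Nat.card {x : F // x = 0 ∨ x ^ k = 1} = k + 1 := by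
  classical
  obtain ⟨ζ, hζ⟩ := exists_isPrimitiveRoot_of_dvd hk
  have hk0 : 0 < k := Nat.pos_of_dvd_of_pos hk (Nat.card_units F ▸ Nat.card_pos)
  have e : {x : F // x = 0 ∨ x ^ k = 1} ≃ (insert 0 (nthRootsFinset k (1 : F)) : Finset F) :=
    Equiv.subtypeEquivRight fun x => by simp [mem_nthRootsFinset hk0]
  rw [Nat.card_congr e, Nat.card_eq_finsetCard, Finset.card_insert_of_notMem,
    hζ.card_nthRootsFinset]
  simp [mem_nthRootsFinset hk0, zero_pow hk0.ne']

end FiniteField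

namespace Subfield

variable {L : Type*} [Field L]

theorem card_sub_one_dvd_card_sub_one [Finite L] (K : Subfield L) :
    Nat.card K - 1 ∣ Nat.card L - 1 := by
  rw [← Nat.card_units, ← Nat.card_units]
  exact Subgroup.card_dvd_of_injective _
    (Units.map_injective (f := K.subtype.toMonoidHom) Subtype.val_injective)

theorem mem_iff_pow_card_sub_one_eq_one (K : Subfield L) [Finite K] {x : L} (hx : x ≠ 0) :
    x ∈ K ↔ x ^ (Nat.card K - 1) = 1 := by
  have := Fintype.ofFinite K
  constructor
  · intro hxK
    have hK := FiniteField.pow_card_sub_one_eq_one (⟨x, hxK⟩ : K) (by simpa [Subtype.ext_iff])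
    simpa [Nat.card_eq_fintype_card] using congrArg Subtype.val hK
  · intro hpow
    -- every `(Q - 1)`-th root of unity in `L` is a power of a generator of `Kˣ`
    obtain ⟨η, hη⟩ := FiniteField.exists_isPrimitiveRoot_of_dvd (F := K) dvd_rfl
    have : NeZero (Nat.card K - 1) := ⟨by have := Finite.one_lt_card (α := K); omega⟩
    obtain ⟨i, -, rfl⟩ := (hη.map_of_injective K.subtype.injective).eq_pow_of_pow_eq_one hpow
    exact pow_mem η.2 i

theorem mem_and_pow_mem_iff [Finite L] (K₁ K₂ : Subfield L) (n : ℕ) (x : L) :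
    x ∈ K₁ ∧ x ^ n ∈ K₂ ↔
      x = 0 ∨ x ^ Nat.gcd (n * (Nat.card K₂ - 1)) (Nat.card K₁ - 1) = 1 := by
  rcases eq_or_ne x 0 with rfl | hx
  · simp [K₁.zero_mem, pow_mem K₂.zero_mem]
  rw [K₁.mem_iff_pow_card_sub_one_eq_one hx, K₂.mem_iff_pow_card_sub_one_eq_one (pow_ne_zero n hx),
    ← pow_mul, pow_gcd_eq_one]
  simp [hx, and_comm]

theorem card_graph_pow [Finite L] (K₁ K₂ : Subfield L) (n : ℕ) :
    Nat.card {xy : L × L // xy.1 ∈ K₁ ∧ xy.2 ∈ K₂ ∧ xy.2 = xy.1 ^ n} =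
      Nat.gcd (n * (Nat.card K₂ - 1)) (Nat.card K₁ - 1) + 1 := by
  have graph : {xy : L × L // xy.1 ∈ K₁ ∧ xy.2 ∈ K₂ ∧ xy.2 = xy.1 ^ n} ≃
      {x : L // x ∈ K₁ ∧ x ^ n ∈ K₂} :=
    { toFun := fun p => ⟨p.1.1, p.2.1, p.2.2.2 ▸ p.2.2.1⟩
      invFun := fun x => ⟨(x.1, x.1 ^ n), x.2.1, x.2.2, rfl⟩
      left_inv := fun ⟨_, h⟩ => Subtype.ext (Prod.ext rfl h.2.2.symm)
      right_inv := fun _ => rfl }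
  rw [Nat.card_congr (graph.trans (Equiv.subtypeEquivRight (mem_and_pow_mem_iff K₁ K₂ n))),
    FiniteField.card_eq_zero_or_pow_eq_one
      ((Nat.gcd_dvd_right _ _).trans K₁.card_sub_one_dvd_card_sub_one)]

end Subfield

theorem curve_point_count_general (q d₁ d₂ m n : ℕ)
    (c : ℕ) (hc : c = Nat.gcd d₁ d₂)
    (M : ℕ) (hM : M = (q ^ (d₁ * m) - 1) / (q ^ (c * m) - 1))
    (L : Type*) [Field L] [Fintype L] (K₁ K₂ : Subfield L)
    (hK₁ : Nat.card K₁ = q ^ (d₁ * m)) (hK₂ : Nat.card K₂ = q ^ (d₂ * m)) :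
    Nat.card {xy : L × L // xy.1 ∈ K₁ ∧ xy.2 ∈ K₂ ∧ xy.2 = xy.1 ^ n} =
      Nat.gcd n M * (q ^ (c * m) - 1) + 1 := by
  have hgcd : Nat.gcd (q ^ (d₁ * m) - 1) (q ^ (d₂ * m) - 1) = q ^ (c * m) - 1 := by
    rw [Nat.pow_sub_one_gcd_pow_sub_one, Nat.gcd_mul_right, hc]
  rw [Subfield.card_graph_pow, hK₁, hK₂, Nat.gcd_mul_left_eq_gcd_div_gcd_mul, hgcd, hM]

/-- point count of the affine curve `y = xⁿ` with coordinates in possibly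
different subfields of a common finite field. With `q` a prime power, `c = gcd(d₁,d₂)`,
and `M = (q^{d₁m} - 1)/(q^{cm} - 1)`, the number of pairs `(x, y)` with
`x ∈ F_{q^{d₁m}}`, `y ∈ F_{q^{d₂m}}` and `y = xⁿ` equals `gcd(n, M)·(q^{cm} - 1) + 1`. -/
theorem curve_point_count (q d₁ d₂ m n : ℕ) (hq : IsPrimePow q)
    (hd₁ : 0 < d₁) (hd₂ : 0 < d₂) (hm : 0 < m) (hn : 0 < n)
    (c : ℕ) (hc : c = Nat.gcd d₁ d₂)
    (M : ℕ) (hM : M = (q ^ (d₁ * m) - 1) / (q ^ (c * m) - 1))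
    (L : Type*) [Field L] [Fintype L] (K₁ K₂ : Subfield L)
    (hK₁ : Nat.card K₁ = q ^ (d₁ * m)) (hK₂ : Nat.card K₂ = q ^ (d₂ * m)) :
    Nat.card {xy : L × L // xy.1 ∈ K₁ ∧ xy.2 ∈ K₂ ∧ xy.2 = xy.1 ^ n} =
      Nat.gcd n M * (q ^ (c * m) - 1) + 1 :=
  curve_point_count_general q d₁ d₂ m n c hc M hM L K₁ K₂ hK₁ hK₂
end

section
/- Let p be a prime, q = p^f, and let c be a positive multiple of q - 1. Then the base-p digit sum satisfies σ_p(c) ≥ σ_p(q - 1) = f·(p - 1). -/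
/-- Base-`p` digit sum. -/
def sigmaDigits (p b : ℕ) : ℕ := (Nat.digits p b).sum

lemma sd_eq (p n : ℕ) (hp : 1 < p) (hn : 0 < n) :
    sigmaDigits p n = n % p + sigmaDigits p (n / p) := by
  unfold sigmaDigits
  rw [Nat.digits_def' hp hn, List.sum_cons]

lemma sd_succ_le (p : ℕ) (hp : 1 < p) : ∀ n, sigmaDigits p (n + 1) ≤ sigmaDigits p n + 1 := by
  intro n
  induction n using Nat.strong_induction_on with
  | _ n ih =>
    rcases Nat.eq_zero_or_pos n with rfl | hn
    · rw [sd_eq p 1 hp one_pos, Nat.mod_eq_of_lt hp, Nat.div_eq_of_lt hp]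
      simp [sigmaDigits]
    rw [sd_eq p n hp hn, sd_eq p (n + 1) hp (by omega)]
    have hmlt := Nat.mod_lt n (show 0 < p by omega)
    have hmod1 : (n + 1) % p = (n % p + 1) % p := by
      rw [Nat.add_mod, Nat.mod_eq_of_lt hp]
    rcases Nat.lt_or_ge (n % p) (p - 1) with h | h
    · have h1 : (n + 1) % p = n % p + 1 := by
        rw [hmod1, Nat.mod_eq_of_lt (by omega)]
      have hnd : ¬ p ∣ n + 1 := by
        intro hd
        obtain ⟨m, hm⟩ := hd
        rw [hm, Nat.mul_mod_right] at h1
        omega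
      have h2 : (n + 1) / p = n / p := Nat.succ_div_of_not_dvd hnd
      rw [h1, h2]
      omega
    · have hmod : n % p = p - 1 := by omega
      have h1 : (n + 1) % p = 0 := by
        rw [hmod1, hmod]
        have : p - 1 + 1 = p := by omega
        rw [this, Nat.mod_self]
      have hd : p ∣ n + 1 := Nat.dvd_of_mod_eq_zero h1
      have h2 : (n + 1) / p = n / p + 1 := Nat.succ_div_of_dvd hd
      rw [h1, h2]
      have hlt : n / p < n := Nat.div_lt_self hn hp
      have := ih (n / p) hlt
      omega

lemma sd_add_le (p : ℕ) (hp : 1 < p) : ∀ n a b, a + b ≤ n →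
    sigmaDigits p (a + b) ≤ sigmaDigits p a + sigmaDigits p b := by
  intro n
  induction n with
  | zero =>
    intro a b hab
    have h1 : a = 0 ∧ b = 0 := by omega
    simp [h1.1, h1.2, sigmaDigits]
  | succ n ih =>
    intro a b hab
    rcases Nat.eq_zero_or_pos a with rfl | ha
    · simp
    rcases Nat.eq_zero_or_pos b with rfl | hb
    · simp
    set k := (a % p + b % p) / p with hk
    have hma := Nat.mod_lt a (show 0 < p by omega)
    have hmb := Nat.mod_lt b (show 0 < p by omega)
    have hk1 : k ≤ 1 := by
      have : (a % p + b % p) / p < 2 := (Nat.div_lt_iff_lt_mul (by omega)).mpr (by omega)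
      omega
    have hsplit : a % p + p * (a / p) + (b % p + p * (b / p)) =
        (a % p + b % p) + p * (a / p + b / p) := by ring
    have hmodadd : (a + b) % p + p * k = a % p + b % p := by
      conv_lhs => rw [← Nat.mod_add_div a p, ← Nat.mod_add_div b p]
      rw [hsplit, Nat.add_mul_mod_self_left, hk, Nat.mod_add_div]
    have hdivadd : (a + b) / p = a / p + b / p + k := by
      conv_lhs => rw [← Nat.mod_add_div a p, ← Nat.mod_add_div b p]
      rw [hsplit, Nat.add_mul_div_left _ _ (show 0 < p by omega), hk]; ring
    have hda : a / p < a := Nat.div_lt_self ha hp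
    have hdb : b / p ≤ b := Nat.div_le_self b p
    have hih : sigmaDigits p (a / p + b / p) ≤ sigmaDigits p (a / p) + sigmaDigits p (b / p) :=
      ih _ _ (by omega)
    have hkstep : sigmaDigits p (a / p + b / p + k) ≤ sigmaDigits p (a / p + b / p) + k := by
      interval_cases k
      · simp
      · exact sd_succ_le p hp _
    have hkp : k ≤ p * k := Nat.le_mul_of_pos_left k (by omega)
    rw [sd_eq p (a + b) hp (by omega), sd_eq p a hp ha, sd_eq p b hp hb, hdivadd]
    omega

lemma sd_split (p f a b : ℕ) (hp : 1 < p) (ha : 0 < a) (hb : b < p ^ f) :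
    sigmaDigits p (b + p ^ f * a) = sigmaDigits p b + sigmaDigits p a := by
  have hlen : (Nat.digits p b).length ≤ f := by
    rcases Nat.eq_zero_or_pos b with rfl | hb0
    · simp
    · rw [Nat.digits_len p b hp (by omega)]
      have : Nat.log p b < f := Nat.log_lt_of_lt_pow (by omega) hb
      omega
  set k := f - (Nat.digits p b).length with hk
  have hf : f = (Nat.digits p b).length + k := by omega
  have h := Nat.digits_append_zeroes_append_digits (b := p) (k := k) (m := a) (n := b) hp ha
  unfold sigmaDigits
  rw [hf, ← h]
  simp [List.sum_append, List.sum_replicate]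

lemma sd_pow_sub_one (p : ℕ) (hp : 1 < p) : ∀ f, sigmaDigits p (p ^ f - 1) = f * (p - 1) := by
  intro f
  induction f with
  | zero => simp [sigmaDigits]
  | succ f ih =>
    have hpf : 1 ≤ p ^ f := Nat.one_le_pow _ _ (by omega)
    have hq : p ^ (f + 1) = p * p ^ f := by ring
    have hpp : p ≤ p * p ^ f := Nat.le_mul_of_pos_right p (by omega)
    have hmul : p * (p ^ f - 1) = p * p ^ f - p := by
      rw [Nat.mul_sub, Nat.mul_one]
    have hn : 0 < p ^ (f + 1) - 1 := by omega
    rw [sd_eq p _ hp hn]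
    have key : p ^ (f + 1) - 1 = (p - 1) + p * (p ^ f - 1) := by omega
    have hmod : (p ^ (f + 1) - 1) % p = p - 1 := by
      rw [key, Nat.add_mul_mod_self_left, Nat.mod_eq_of_lt (by omega)]
    have hdiv : (p ^ (f + 1) - 1) / p = p ^ f - 1 := by
      rw [key, Nat.add_mul_div_left _ _ (show 0 < p by omega),
        Nat.div_eq_of_lt (by omega), Nat.zero_add]
    rw [hmod, hdiv, ih, add_mul, one_mul]
    omega

theorem sigma_multiple_of_q_sub_one (p f q c : ℕ) (hp : p.Prime) (hf : 1 ≤ f)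
    (hq : q = p ^ f) (hc : 0 < c) (hdvd : (q - 1) ∣ c) :
    sigmaDigits p c ≥ sigmaDigits p (q - 1) ∧ sigmaDigits p (q - 1) = f * (p - 1) := by
  subst hq
  have hp1 : 1 < p := hp.one_lt
  have hq2 : 2 ≤ p ^ f := by
    calc 2 ≤ p := hp1
    _ = p ^ 1 := (pow_one p).symm
    _ ≤ p ^ f := Nat.pow_le_pow_right (by omega) hf
  refine ⟨?_, sd_pow_sub_one p hp1 f⟩
  clear hf
  induction c using Nat.strong_induction_on with
  | _ c ih =>
    rcases Nat.lt_or_ge c (p ^ f) with hlt | hge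
    · have hle : p ^ f - 1 ≤ c := Nat.le_of_dvd hc hdvd
      have hce : c = p ^ f - 1 := by omega
      rw [hce]
    · obtain ⟨a, b, hb, hcab⟩ : ∃ a b, b < p ^ f ∧ c = b + p ^ f * a :=
        ⟨c / p ^ f, c % p ^ f, Nat.mod_lt c (by omega),
          (Nat.mod_add_div c (p ^ f)).symm⟩
      have ha : 0 < a := by
        rcases Nat.eq_zero_or_pos a with rfl | ha
        · simp at hcab; omega
        · exact ha
      have hsplit := sd_split p f a b hp1 ha hb
      have hsm : (p ^ f - 1) * a + a = p ^ f * a := by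
        obtain ⟨m, hm⟩ := Nat.exists_eq_add_of_le (show 1 ≤ p ^ f by omega)
        rw [hm, Nat.add_sub_cancel_left]
        ring
      have h2a : 2 * a ≤ p ^ f * a := Nat.mul_le_mul hq2 le_rfl
      have hkey : (a + b) + (p ^ f - 1) * a = c := by omega
      have hdvd' : (p ^ f - 1) ∣ (a + b) := by
        have h := Nat.dvd_sub hdvd (dvd_mul_right (p ^ f - 1) a)
        rwa [← hkey, Nat.add_sub_cancel] at h
      have hablt : a + b < c := by omega
      have habpos : 0 < a + b := by omega
      have hIH := ih (a + b) hablt habpos hdvd'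
      have hsub : sigmaDigits p (a + b) ≤ sigmaDigits p a + sigmaDigits p b :=
        sd_add_le p hp1 (a + b) a b le_rfl
      rw [hcab, hsplit]
      omega
end

section
/- Let p be a prime, q = p^a, and F ∈ F_q[x1, ..., xn] a polynomial. Write each variable xi = ∑_{j=1}^{a} z_{ij} μ_j for an F_p-basis {μ_j} of F_q. Then there exist polynomials G_1, ..., G_a ∈ F_p[z_{ij}] with deg G_l ≤ w_p(F) for all l, such that F(x) = ∑_{l=1}^a G_l(z) μ_l, where w_p(F) is the p-weight of F (max over monomials x^u of ∑_i σ_p(u_i)). -/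
/-- The `p`-weight of a multivariable polynomial: the maximum over its monomials `x^u`
of the total base-`p` digit sum `σ_p(u₁) + ⋯ + σ_p(u_n)`. -/
def pWeight {σ K : Type*} [CommSemiring K] (p : ℕ) (F : MvPolynomial σ K) : ℕ :=
  F.support.sup fun u => u.sum fun _ e => (Nat.digits p e).sum

/-!
At points with coordinates in `𝔽_p`, the `pᵏ`-th power of a linear form `∑ⱼ zⱼ μⱼ` is again a
linear form, with coefficients `μⱼ^{pᵏ}`. Expanding each `xᵢ^e` along the base-`p` digits of `e`
therefore writes `F(x)` as a polynomial `H` in the `z`'s with coefficients in `𝔽_q` and of degree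
at most `w_p(F)`; the `G_l` are the coordinates of the coefficients of `H` in the basis `μ`.
-/

open MvPolynomial

section CharP

variable {σ τ K : Type*} [CommRing K] (p : ℕ) [Fact p.Prime] [CharP K p]

/-- `frobeniusDigitPow p L e = ∏ₖ (L^{(pᵏ)})^{dₖ}`, where `e = ∑ₖ dₖ pᵏ` in base `p` and
`L^{(pᵏ)}` raises the coefficients of `L` to the `pᵏ`-th power. At points whose coordinates are
fixed by Frobenius it agrees with `L ^ e`, but its degree only grows with the digit sum of `e`. -/
noncomputable def frobeniusDigitPow (L : MvPolynomial τ K) : ℕ → MvPolynomial τ K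
  | 0 => 1
  | e + 1 => L ^ ((e + 1) % p) * map (frobenius K p) (frobeniusDigitPow L ((e + 1) / p))
  decreasing_by exact Nat.div_lt_self e.succ_pos (Fact.out : p.Prime).one_lt

variable {p}

theorem totalDegree_frobeniusDigitPow_le {L : MvPolynomial τ K} (hL : L.totalDegree ≤ 1)
    (e : ℕ) : (frobeniusDigitPow p L e).totalDegree ≤ (Nat.digits p e).sum := by
  induction e using Nat.strong_induction_on with
  | _ e ih =>
    match e with
    | 0 => simp [frobeniusDigitPow]
    | e + 1 =>
      have hp : 1 < p := (Fact.out : p.Prime).one_lt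
      rw [frobeniusDigitPow, Nat.digits_def' hp e.succ_pos, List.sum_cons]
      refine (totalDegree_mul _ _).trans (add_le_add ?_ ?_)
      · calc (L ^ ((e + 1) % p)).totalDegree ≤ (e + 1) % p * L.totalDegree := totalDegree_pow _ _
          _ ≤ (e + 1) % p := by simpa using Nat.mul_le_mul_left _ hL
      · exact (totalDegree_le_of_support_subset (support_map_subset _ _)).trans
          (ih _ (Nat.div_lt_self e.succ_pos hp))

theorem eval_map_frobenius {z : τ → K} (hz : ∀ v, z v ^ p = z v) (P : MvPolynomial τ K) :
    eval z (map (frobenius K p) P) = eval z P ^ p := by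
  have hz' : frobenius K p ∘ z = z := funext hz
  rw [eval_map, ← hz', ← eval₂_comp, frobenius_def, hz']

theorem eval_frobeniusDigitPow {z : τ → K} (hz : ∀ v, z v ^ p = z v) (L : MvPolynomial τ K)
    (e : ℕ) : eval z (frobeniusDigitPow p L e) = eval z L ^ e := by
  induction e using Nat.strong_induction_on with
  | _ e ih =>
    match e with
    | 0 => simp [frobeniusDigitPow]
    | e + 1 =>
      have hp : 1 < p := (Fact.out : p.Prime).one_lt
      rw [frobeniusDigitPow, map_mul, map_pow, eval_map_frobenius hz,
        ih _ (Nat.div_lt_self e.succ_pos hp), ← pow_mul, ← pow_add, Nat.mod_add_div']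

theorem exists_totalDegree_le_pWeight_eval_eq {L : σ → MvPolynomial τ K}
    (hL : ∀ i, (L i).totalDegree ≤ 1) (F : MvPolynomial σ K) :
    ∃ H : MvPolynomial τ K, H.totalDegree ≤ pWeight p F ∧
      ∀ z : τ → K, (∀ v, z v ^ p = z v) → eval z H = eval (fun i => eval z (L i)) F := by
  refine ⟨∑ u ∈ F.support, C (coeff u F) * u.prod fun i e => frobeniusDigitPow p (L i) e,
    ?_, fun z hz => ?_⟩
  · refine totalDegree_finsetSum_le fun u hu => ?_
    refine (totalDegree_mul _ _).trans ?_
    rw [totalDegree_C, zero_add]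
    refine (totalDegree_finsetProd _ _).trans ?_
    refine (Finset.sum_le_sum fun i _ => totalDegree_frobeniusDigitPow_le (hL i) (u i)).trans ?_
    exact Finset.le_sup (f := fun u => u.sum fun _ e => (Nat.digits p e).sum) hu
  · conv_rhs => rw [eval_eq]
    simp only [map_sum, map_mul, eval_C, Finsupp.prod, map_prod, eval_frobeniusDigitPow hz]

end CharP

theorem totalDegree_sum_smul_X_le_one {ι τ R : Type*} [CommSemiring R] [Fintype ι] (c : ι → R)
    (v : ι → τ) : (∑ j, c j • X (v j) : MvPolynomial τ R).totalDegree ≤ 1 :=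
  totalDegree_finsetSum_le fun _ _ =>
    (totalDegree_smul_le _ _).trans (isHomogeneous_X R _).totalDegree_le

theorem exists_totalDegree_le_eval_algebraMap_eq_sum_smul {k K ι τ : Type*} [CommRing k]
    [CommRing K] [Algebra k K] [Fintype ι] (b : Module.Basis ι k K) (H : MvPolynomial τ K) :
    ∃ G : ι → MvPolynomial τ k, (∀ l, (G l).totalDegree ≤ H.totalDegree) ∧
      ∀ z : τ → k, eval (algebraMap k K ∘ z) H = ∑ l, eval z (G l) • b l := by
  set G : ι → MvPolynomial τ k := fun l => AddMonoidAlgebra.map (b.coord l).toAddMonoidHom H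
  have hG : ∀ l m, coeff m (G l) = b.repr (coeff m H) l := fun _ _ => rfl
  have hH : H = ∑ l, C (b l) * map (algebraMap k K) (G l) := by
    ext m
    simp only [coeff_sum, coeff_C_mul, coeff_map, hG, mul_comm (b _), ← Algebra.smul_def,
      b.sum_repr]
  refine ⟨G, fun l => Finset.sup_mono fun m hm => ?_, fun z => ?_⟩
  · rw [mem_support_iff, hG] at hm
    rw [mem_support_iff]
    intro h
    simp [h] at hm
  · conv_lhs => rw [hH]
    simp only [map_sum, map_mul, eval_C, eval_map, ← eval₂_comp, Algebra.smul_def, mul_comm]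

theorem reduction_to_prime_field_general (p a : ℕ) (hp : p.Prime)
    (K : Type*) [Field K] [Algebra (ZMod p) K]
    (μ : Module.Basis (Fin a) (ZMod p) K)
    (n : ℕ) (F : MvPolynomial (Fin n) K) :
    ∃ G : Fin a → MvPolynomial (Fin n × Fin a) (ZMod p),
      (∀ l, (G l).totalDegree ≤ pWeight p F) ∧
      ∀ z : Fin n × Fin a → ZMod p,
        MvPolynomial.eval (fun i => ∑ j, z (i, j) • μ j) F =
          ∑ l, MvPolynomial.eval z (G l) • μ l := by
  have : Fact p.Prime := ⟨hp⟩
  have : CharP K p := charP_of_injective_algebraMap (algebraMap (ZMod p) K).injective p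
  obtain ⟨H, hH_deg, hH_eval⟩ := exists_totalDegree_le_pWeight_eval_eq
    (fun i => totalDegree_sum_smul_X_le_one μ (fun j => (i, j))) F
  obtain ⟨G, hG_deg, hG_eval⟩ := exists_totalDegree_le_eval_algebraMap_eq_sum_smul μ H
  refine ⟨G, fun l => (hG_deg l).trans hH_deg, fun z => ?_⟩
  rw [← hG_eval, hH_eval _ fun v => by simp only [Function.comp_apply, ← map_pow, ZMod.pow_card]]
  simp [Algebra.smul_def, mul_comm]

/-- reduction to the prime field. Writing each variable `xᵢ = ∑ⱼ z_{ij} μⱼ`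
in an `F_p`-basis `μ` of `F_q` (`q = p^a`), there are polynomials `G₁, …, G_a` over `F_p`
in the variables `z_{ij}`, each of total degree at most the `p`-weight `w_p(F)`, with
`F(x) = ∑_l G_l(z) μ_l`. -/
theorem reduction_to_prime_field (p a : ℕ) (hp : p.Prime) (ha : 0 < a)
    (K : Type*) [Field K] [Fintype K] [Algebra (ZMod p) K]
    (hcard : Fintype.card K = p ^ a)
    (μ : Module.Basis (Fin a) (ZMod p) K)
    (n : ℕ) (F : MvPolynomial (Fin n) K) :
    ∃ G : Fin a → MvPolynomial (Fin n × Fin a) (ZMod p),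
      (∀ l, (G l).totalDegree ≤ pWeight p F) ∧
      ∀ z : Fin n × Fin a → ZMod p,
        MvPolynomial.eval (fun i => ∑ j, z (i, j) • μ j) F =
          ∑ l, MvPolynomial.eval z (G l) • μ l :=
  reduction_to_prime_field_general p a hp K μ n F
end

section
/- Let (N_m)_{m≥1} be a sequence of integers such that exp(∑ N_m T^m/m) = ∏_i (1-α_i T) / ∏_j (1-β_j T) is a rational function with nonzero algebraic numbers α_i, β_j, and suppose v(N_m) ≥ mρ for all m ≥ 1, where v is a valuation (e.g., ord_q) and ρ ∈ R. Then v(α_i) ≥ ρ and v(β_j) ≥ ρ for all i, j. -/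
/-!
Extend `v` to an additive valuation `w` with `w 0 = ⊤` and write `N_m = ∑_y e_y y^m` with
nonzero integer coefficients `e_y`. If some root had valuation below `ρ`, let `x` be one of least
valuation `c < ρ`. After dividing by `x^m`, the power sums `∑ e_y (y/x)^m` over the roots `y` of
valuation `c` differ from `N_m / x^m` by terms whose valuations grow linearly in `m`, so their
valuations tend to `⊤`, while the bases `y/x` are distinct units. Power sums of distinct units
with valuations tending to `⊤` vanish identically (eliminate one base `u` at a time by passing to
`s_{m+1} - u s_m`), which forces `e_x = 0`.
-/

open Filter

theorem Finset.sum_multiset_map_count_of_subset {ι M : Type*} [DecidableEq ι]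
    [AddCommMonoid M] (s : Multiset ι) {D : Finset ι} (hs : s.toFinset ⊆ D) (f : ι → M) :
    (s.map f).sum = ∑ y ∈ D, s.count y • f y := by
  rw [Finset.sum_multiset_map_count]
  exact Finset.sum_subset hs fun y _ hy => by
    rw [Multiset.count_eq_zero_of_notMem (mt Multiset.mem_toFinset.2 hy), zero_smul]

theorem Multiset.sum_map_sub_sum_map_eq_sum_count {ι R : Type*} [DecidableEq ι] [Ring R]
    (α β : Multiset ι) (f : ι → R) :
    (β.map f).sum - (α.map f).sum
      = ∑ y ∈ (α + β).toFinset, ((β.count y - α.count y : ℤ) : R) * f y := by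
  rw [Finset.sum_multiset_map_count_of_subset β (D := (α + β).toFinset) (by simp) f,
    Finset.sum_multiset_map_count_of_subset α (D := (α + β).toFinset) (by simp) f,
    ← Finset.sum_sub_distrib]
  refine Finset.sum_congr rfl fun y _ => ?_
  push_cast
  rw [sub_mul, nsmul_eq_mul, nsmul_eq_mul]

theorem Multiset.count_sub_count_ne_zero {ι : Type*} [DecidableEq ι] {α β : Multiset ι}
    (hdisj : ∀ x ∈ α, x ∉ β) {y : ι} (hy : y ∈ α + β) :
    (β.count y - α.count y : ℤ) ≠ 0 := by
  rw [sub_ne_zero]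
  rcases Multiset.mem_add.1 hy with h | h
  · rw [Multiset.count_eq_zero_of_notMem (hdisj y h)]
    exact_mod_cast (Multiset.count_pos.2 h).ne
  · rw [Multiset.count_eq_zero_of_notMem fun h' => hdisj y h' h]
    exact_mod_cast (Multiset.count_pos.2 h).ne'

theorem WithTop.eventually_coe_le_nsmul {r : WithTop ℝ} (hr : 0 < r) (M : ℝ) :
    ∀ᶠ m : ℕ in atTop, (M : WithTop ℝ) ≤ m • r := by
  induction r with
  | top =>
    filter_upwards [eventually_ge_atTop 1] with m hm
    rw [← Nat.succ_pred_eq_of_pos hm, succ_nsmul, WithTop.add_top]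
    exact le_top
  | coe x =>
    obtain ⟨n, hn⟩ := Archimedean.arch M (WithTop.coe_pos.1 hr)
    filter_upwards [eventually_ge_atTop n] with m hm
    rw [← WithTop.coe_nsmul, WithTop.coe_le_coe]
    exact hn.trans (nsmul_le_nsmul_left (WithTop.coe_pos.1 hr).le hm)

namespace AddValuation

theorem map_intCast_nonneg {R Γ₀ : Type*} [Ring R] [LinearOrderedAddCommMonoidWithTop Γ₀]
    (v : AddValuation R Γ₀) (n : ℤ) : 0 ≤ v n := by
  induction n using Int.induction_on with
  | zero => simp
  | succ k ih => push_cast at ih ⊢; exact v.map_le_add ih v.map_one.ge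
  | pred k ih => push_cast at ih ⊢; exact v.map_le_sub ih v.map_one.ge

variable {K : Type*} [Field K]

open scoped Classical in
noncomputable def ofNonzero (v : K → ℝ)
    (hmul : ∀ x y : K, x ≠ 0 → y ≠ 0 → v (x * y) = v x + v y)
    (hadd : ∀ x y : K, x ≠ 0 → y ≠ 0 → x + y ≠ 0 → min (v x) (v y) ≤ v (x + y)) :
    AddValuation K (WithTop ℝ) :=
  AddValuation.of (fun x => if x = 0 then ⊤ else (v x : WithTop ℝ)) (if_pos rfl)
    (by
      have h := hmul 1 1 one_ne_zero one_ne_zero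
      rw [mul_one] at h
      simp only [one_ne_zero, if_false, WithTop.coe_eq_zero]
      linarith)
    (fun x y => by
      by_cases hx : x = 0
      · simp [hx]
      by_cases hy : y = 0
      · simp [hy]
      by_cases hxy : x + y = 0
      · simp [hxy]
      simp only [hx, hy, hxy, if_false, ← WithTop.coe_min, WithTop.coe_le_coe]
      exact hadd x y hx hy hxy)
    (fun x y => by
      by_cases hx : x = 0
      · simp [hx]
      by_cases hy : y = 0
      · simp [hy]
      simp only [hx, hy, mul_ne_zero hx hy, if_false, ← WithTop.coe_add, hmul x y hx hy])

theorem ofNonzero_apply {v : K → ℝ} {hmul hadd} {x : K} (hx : x ≠ 0) :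
    ofNonzero v hmul hadd x = v x := by
  simp [ofNonzero, hx]

variable (w : AddValuation K (WithTop ℝ))

theorem eq_zero_of_forall_eventually_le_sum_mul_pow {ι : Type*} (s : Finset ι) (u : ι → K)
    (hinj : Set.InjOn u s) (hu : ∀ i ∈ s, w (u i) = 0) (a : ι → K)
    (h : ∀ M : ℝ, ∀ᶠ m in atTop, (M : WithTop ℝ) ≤ w (∑ i ∈ s, a i * u i ^ m)) :
    ∀ i ∈ s, a i = 0 := by
  classical
  induction s using Finset.induction_on generalizing a with
  | empty => simp
  | insert b s hb ih =>
    have hub : w (u b) = 0 := hu b (Finset.mem_insert_self b s)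
    have hdiff (m : ℕ) : ∑ i ∈ s, a i * (u i - u b) * u i ^ m =
        ∑ i ∈ insert b s, a i * u i ^ (m + 1) - u b * ∑ i ∈ insert b s, a i * u i ^ m := by
      have hterm : ∀ i ∈ s, a i * (u i - u b) * u i ^ m
          = a i * u i ^ (m + 1) - u b * (a i * u i ^ m) := fun i _ => by ring
      rw [Finset.sum_congr rfl hterm, Finset.sum_sub_distrib, Finset.sum_insert hb,
        Finset.sum_insert hb, mul_add, Finset.mul_sum]
      ring
    have hs : ∀ i ∈ s, a i * (u i - u b) = 0 := by
      refine ih (hinj.mono (by simp)) (fun i hi => hu i (Finset.mem_insert_of_mem hi)) _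
        fun M => ?_
      filter_upwards [h M, (tendsto_add_atTop_nat 1).eventually (h M)] with m hm hm'
      rw [hdiff]
      refine w.map_le_sub hm' ?_
      rwa [map_mul, hub, zero_add]
    have ha : ∀ i ∈ s, a i = 0 := fun i hi =>
      (mul_eq_zero.1 (hs i hi)).resolve_right <| sub_ne_zero.2 fun hib =>
        hb (hinj (Finset.mem_insert_of_mem hi) (Finset.mem_insert_self b s) hib ▸ hi)
    have hab : a b = 0 := by
      rw [← w.top_iff, WithTop.eq_top_iff_forall_ge]
      intro M
      obtain ⟨m, hm⟩ := (h M).exists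
      rwa [Finset.sum_insert hb, Finset.sum_eq_zero fun i hi => by rw [ha i hi, zero_mul],
        add_zero, map_mul, map_pow, hub, smul_zero, add_zero] at hm
    simpa [hab] using ha

theorem eventually_le_mul_pow {a u : K} (ha : 0 ≤ w a) (hu : 0 < w u) (M : ℝ) :
    ∀ᶠ m in atTop, (M : WithTop ℝ) ≤ w (a * u ^ m) := by
  filter_upwards [WithTop.eventually_coe_le_nsmul hu M] with m hm
  calc (M : WithTop ℝ) ≤ m • w u := hm
    _ ≤ w a + m • w u := le_add_of_nonneg_left ha
    _ = w (a * u ^ m) := by rw [map_mul, map_pow]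

theorem eventually_le_div_pow {z : ℕ → K} {x : K} {c ρ : ℝ} (hx : w x = c) (hcρ : c < ρ)
    (hz : ∀ m : ℕ, 1 ≤ m → ((m * ρ : ℝ) : WithTop ℝ) ≤ w (z m)) (M : ℝ) :
    ∀ᶠ m in atTop, (M : WithTop ℝ) ≤ w (z m / x ^ m) := by
  filter_upwards [WithTop.eventually_coe_le_nsmul (WithTop.coe_pos.2 (sub_pos.2 hcρ)) M,
    eventually_ge_atTop 1] with m hM hm
  refine hM.trans ?_
  have hsub : ((m • (ρ - c) : ℝ) : WithTop ℝ)
      = ((m * ρ : ℝ) : WithTop ℝ) - ((m • c : ℝ) : WithTop ℝ) := by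
    rw [← WithTop.LinearOrderedAddCommGroup.coe_sub, smul_sub, nsmul_eq_mul]
  rw [map_div, map_pow, hx, ← WithTop.coe_nsmul, ← WithTop.coe_nsmul, hsub]
  exact (LinearOrderedAddCommGroupWithTop.sub_le_sub_iff_left_of_ne_top
    WithTop.coe_ne_top).2 (hz m hm)

theorem le_of_forall_le_sum_mul_pow (D : Finset K) (e : K → K) (he : ∀ y ∈ D, e y ≠ 0)
    (he_int : ∀ y ∈ D, 0 ≤ w (e y)) (ρ : ℝ)
    (h : ∀ m : ℕ, 1 ≤ m → ((m * ρ : ℝ) : WithTop ℝ) ≤ w (∑ y ∈ D, e y * y ^ m)) :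
    ∀ y ∈ D, (ρ : WithTop ℝ) ≤ w y := by
  classical
  by_contra! ⟨y₀, hy₀, hy₀ρ⟩
  obtain ⟨x, hxD, hxmin⟩ := D.exists_min_image w ⟨y₀, hy₀⟩
  have hxρ : w x < ρ := (hxmin y₀ hy₀).trans_lt hy₀ρ
  obtain ⟨c, hc⟩ := WithTop.ne_top_iff_exists.1 (hxρ.trans (WithTop.coe_lt_top ρ)).ne
  have hx0 : x ≠ 0 := w.ne_top_iff.1 (hc ▸ WithTop.coe_ne_top)
  set S := D.filter fun y => w y = w x
  set T := D.filter fun y => ¬ w y = w x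
  have hsplit (m : ℕ) : ∑ y ∈ S, e y * (y / x) ^ m
      = (∑ y ∈ D, e y * y ^ m) / x ^ m - ∑ y ∈ T, e y * (y / x) ^ m := by
    rw [eq_sub_iff_add_eq, Finset.sum_filter_add_sum_filter_not, Finset.sum_div]
    exact Finset.sum_congr rfl fun y _ => by rw [div_pow, mul_div_assoc]
  have hT : ∀ y ∈ T, 0 < w (y / x) := fun y hy => by
    obtain ⟨hyD, hyx⟩ := Finset.mem_filter.1 hy
    rw [map_div, LinearOrderedAddCommGroupWithTop.sub_pos]
    exact Or.inl (lt_of_le_of_ne (hxmin y hyD) (Ne.symm hyx))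
  have hS : ∀ y ∈ S, w (y / x) = 0 := fun y hy => by
    rw [map_div, (Finset.mem_filter.1 hy).2,
      LinearOrderedAddCommGroupWithTop.sub_self_eq_zero_iff_ne_top, ← hc]
    exact WithTop.coe_ne_top
  refine he x hxD <| w.eq_zero_of_forall_eventually_le_sum_mul_pow S (· / x)
    (fun _ _ _ _ h => (div_left_inj' hx0).1 h) hS e (fun M => ?_) x (by simp [S, hxD])
  have hrest := (eventually_all_finset T).2 fun y hy =>
    w.eventually_le_mul_pow (he_int y (Finset.filter_subset _ D hy)) (hT y hy) M
  filter_upwards [w.eventually_le_div_pow hc.symm (WithTop.coe_lt_coe.1 (hc ▸ hxρ)) h M,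
    hrest] with m h1 h2
  rw [hsplit]
  exact w.map_le_sub h1 (w.map_le_sum h2)

end AddValuation

/-- Ax's argument: let `α, β` be multisets of nonzero elements of a field
`K` (the reciprocal zeros and poles of a rational power series, written in reduced form so
that no `α` equals a `β`), let `v` be a valuation on `K` (written additively), and let
`N_m = ∑ β^m − ∑ α^m` be integers with `v(N_m) ≥ m·ρ` for all `m ≥ 1` (vacuous when
`N_m = 0`, as `v(0) = ∞`). Then `v(α_i) ≥ ρ` and `v(β_j) ≥ ρ` for all `i, j`. -/
theorem valuation_bound_of_power_sums (K : Type*) [Field K] [CharZero K]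
    (v : K → ℝ)
    (hv_mul : ∀ x y : K, x ≠ 0 → y ≠ 0 → v (x * y) = v x + v y)
    (hv_add : ∀ x y : K, x ≠ 0 → y ≠ 0 → x + y ≠ 0 → min (v x) (v y) ≤ v (x + y))
    (α β : Multiset K)
    (hα : ∀ x ∈ α, x ≠ 0) (hβ : ∀ x ∈ β, x ≠ 0)
    (hdisj : ∀ x ∈ α, x ∉ β)
    (ρ : ℝ) (N : ℕ → ℤ)
    (hN : ∀ m : ℕ, 1 ≤ m →
      (N m : K) = (β.map fun x => x ^ m).sum - (α.map fun x => x ^ m).sum)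
    (hdiv : ∀ m : ℕ, 1 ≤ m → N m = 0 ∨ (m : ℝ) * ρ ≤ v ((N m : K))) :
    (∀ x ∈ α, ρ ≤ v x) ∧ (∀ x ∈ β, ρ ≤ v x) := by
  classical
  set w := AddValuation.ofNonzero v hv_mul hv_add
  set D := (α + β).toFinset
  have hbound := w.le_of_forall_le_sum_mul_pow D (fun y => ((β.count y - α.count y : ℤ) : K))
    (fun y hy => Int.cast_ne_zero.2 (Multiset.count_sub_count_ne_zero hdisj
      (Multiset.mem_toFinset.1 hy)))
    (fun y _ => w.map_intCast_nonneg _) ρ fun m hm => by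
      rw [← Multiset.sum_map_sub_sum_map_eq_sum_count, ← hN m hm]
      by_cases h0 : N m = 0
      · simp [h0]
      · rw [AddValuation.ofNonzero_apply (Int.cast_ne_zero.2 h0)]
        exact WithTop.coe_le_coe.2 ((hdiv m hm).resolve_left h0)
  have hv (y : K) (hy : y ∈ D) (hy0 : y ≠ 0) : ρ ≤ v y := by
    simpa [w, AddValuation.ofNonzero_apply hy0] using hbound y hy
  exact ⟨fun x hx => hv x (by simp [D, hx]) (hα x hx),
    fun x hx => hv x (by simp [D, hx]) (hβ x hx)⟩
end
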